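/- arXiv:2401.02085 — 4 statements merged into one kernel-verified Lean document; each statement's English description precedes it below -/
import Mathlib

section
/- Let I_0 solve I_0 = ∑_{n≥0} (t_n/n!) I_0^n and define I_k = ∑_{p≥0} (I_0^p/p!) t_{p+k} for k ≥ 1. Then as an identity of formal power series in v, -(1/2)v² + ∑_{n≥0} t_n v^{n+1}/(n+1)! = I_{-1} + ∑_{n≥1} (I_n - δ_{n,1}) (v - I_0)^{n+1}/(n+1)!, where I_{-1} = ∑_{n≥0} t_n I_0^{n+1}/(n+1)! - (1/2)I_0². -/
open scoped Nat

noncomputable section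

/-- The product (coefficientwise) topology on the big phase space ring `ℚ[[t₀, t₁, …]]`. -/
instance : TopologicalSpace (MvPowerSeries ℕ ℚ) :=
  @Pi.topologicalSpace (ℕ →₀ ℕ) (fun _ => ℚ) (fun _ => inferInstance)

/-- The product topology on power series in the auxiliary variable `v` over
`ℚ[[t₀, t₁, …]]`. -/
instance : TopologicalSpace (PowerSeries (MvPowerSeries ℕ ℚ)) :=
  @Pi.topologicalSpace (Unit →₀ ℕ) (fun _ => MvPowerSeries ℕ ℚ) (fun _ => inferInstance)


namespace LG
open Finset MvPowerSeries
open Finset MvPowerSeries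

def deg (d : ℕ →₀ ℕ) : ℕ := d.sum fun _ n => n

lemma deg_add (d1 d2 : ℕ →₀ ℕ) : deg (d1 + d2) = deg d1 + deg d2 :=
  Finsupp.sum_add_index' (fun _ => rfl) (fun _ _ _ => rfl)

lemma deg_pos {d : ℕ →₀ ℕ} (h : d ≠ 0) : 0 < deg d := by
  obtain ⟨i, hi⟩ : ∃ i, d i ≠ 0 := by
    by_contra h'; push_neg at h'; exact h (Finsupp.ext fun i => h' i)
  have h2 : d i ≤ deg d :=
    Finset.single_le_sum (f := fun i => d i) (fun _ _ => Nat.zero_le _) (Finsupp.mem_support_iff.2 hi)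
  omega

lemma coeff_pow_mul_eq_zero {u : MvPowerSeries ℕ ℚ} (h0 : constantCoeff (σ := ℕ) (R := ℚ) u = 0) :
    ∀ (p : ℕ) (y : MvPowerSeries ℕ ℚ) (d : ℕ →₀ ℕ), deg d < p → coeff (R := ℚ) d (u ^ p * y) = 0 := by
  intro p
  induction p with
  | zero => intro y d h; omega
  | succ p ih =>
    intro y d h
    rw [show u ^ (p+1) * y = u * (u ^ p * y) by ring, coeff_mul]
    apply Finset.sum_eq_zero
    rintro ⟨d1, d2⟩ hmem
    rw [Finset.HasAntidiagonal.mem_antidiagonal] at hmem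
    by_cases h1 : d1 = 0
    · subst h1
      simp [coeff_zero_eq_constantCoeff, h0]
    · have hd : deg d1 + deg d2 = deg d := by rw [← deg_add, hmem]
      have h2 := deg_pos h1
      rw [ih y d2 (by omega), mul_zero]

lemma coeff_mul_congr {x x' z : MvPowerSeries ℕ ℚ} (d : ℕ →₀ ℕ)
    (h : ∀ d1, d1 ≤ d → coeff (R := ℚ) d1 x = coeff (R := ℚ) d1 x') :
    coeff (R := ℚ) d (x * z) = coeff (R := ℚ) d (x' * z) := by
  rw [coeff_mul, coeff_mul]
  refine Finset.sum_congr rfl ?_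
  rintro ⟨d1, d2⟩ hmem
  rw [Finset.HasAntidiagonal.mem_antidiagonal] at hmem
  rw [h d1 (hmem ▸ le_self_add)]

lemma hasSum_coeff_eq {f : ℕ → MvPowerSeries ℕ ℚ} {x : MvPowerSeries ℕ ℚ} (h : HasSum f x)
    (d : ℕ →₀ ℕ) (N : ℕ) (hN : ∀ n, N ≤ n → coeff (R := ℚ) d (f n) = 0) :
    coeff (R := ℚ) d x = ∑ n ∈ Finset.range N, coeff (R := ℚ) d (f n) := by
  have hd : HasSum (fun n => coeff (R := ℚ) d (f n)) (coeff (R := ℚ) d x) := Pi.hasSum.1 h d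
  have h2 : HasSum (fun n => coeff (R := ℚ) d (f n)) (∑ n ∈ Finset.range N, coeff (R := ℚ) d (f n)) :=
    hasSum_sum_of_ne_finset_zero (fun n hn => hN n (by simpa using hn))
  exact hd.unique h2

lemma hasSumS {f : ℕ → PowerSeries (MvPowerSeries ℕ ℚ)} {x : PowerSeries (MvPowerSeries ℕ ℚ)}
    (h : ∀ (m : ℕ) (d : ℕ →₀ ℕ), ∃ N,
      (∀ n, N ≤ n → coeff (R := ℚ) d (PowerSeries.coeff m (f n)) = 0) ∧
      ∑ n ∈ Finset.range N, coeff (R := ℚ) d (PowerSeries.coeff m (f n))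
        = coeff (R := ℚ) d (PowerSeries.coeff m x)) :
    HasSum f x := by
  refine Pi.hasSum.2 ?_; intro e
  have he : e = Finsupp.single () (e ()) := by
    refine Finsupp.ext fun i => ?_; cases i; simp
  rw [he]; refine Pi.hasSum.2 ?_; intro d
  obtain ⟨N, h1, h2⟩ := h (e ()) d
  have h3 := hasSum_sum_of_ne_finset_zero (s := Finset.range N) (L := SummationFilter.unconditional ℕ)
    (f := fun n => coeff (R := ℚ) d (PowerSeries.coeff (e ()) (f n)))
    (fun n hn => h1 n (by simpa using hn))
  rw [h2] at h3
  exact h3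

lemma sum_sq_eq_sum_antidiagonal {M : Type*} [AddCommMonoid M] (N : ℕ) (g : ℕ → ℕ → M)
    (hg : ∀ n p, N ≤ n + p → g n p = 0) :
    ∑ n ∈ range N, ∑ p ∈ range N, g n p = ∑ j ∈ range N, ∑ i ∈ range (j+1), g i (j - i) := by
  rw [← Finset.sum_product']
  have h1 : ∀ j ∈ range N, ∑ i ∈ range (j+1), g i (j - i)
      = ∑ x ∈ Finset.HasAntidiagonal.antidiagonal j, g x.1 x.2 := by
    intro j _
    rw [Finset.Nat.sum_antidiagonal_eq_sum_range_succ_mk]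
  rw [Finset.sum_congr rfl h1, ← Finset.sum_biUnion]
  · apply (Finset.sum_subset ?_ ?_).symm
    · intro x hx
      rw [Finset.mem_biUnion] at hx
      obtain ⟨j, hj, hx⟩ := hx
      rw [Finset.HasAntidiagonal.mem_antidiagonal] at hx
      rw [Finset.mem_range] at hj
      simp only [Finset.mem_product, Finset.mem_range]
      omega
    · intro x _ hx
      apply hg
      by_contra hlt
      push_neg at hlt
      exact hx (Finset.mem_biUnion.2 ⟨x.1 + x.2, Finset.mem_range.2 (by omega),
        Finset.HasAntidiagonal.mem_antidiagonal.2 rfl⟩)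
  · intro a _ b _ hab
    simp only [Function.onFun, Finset.disjoint_left]
    intro x hxa hxb
    rw [Finset.HasAntidiagonal.mem_antidiagonal] at hxa hxb
    exact hab (hxa ▸ hxb)


lemma inv_factorial_pair (K a : ℕ) (h : a ≤ K) :
    ((a ! : ℚ))⁻¹ * (((K - a)! : ℚ))⁻¹ = (K.choose a : ℚ) * ((K ! : ℚ))⁻¹ := by
  have h1 := Nat.choose_mul_factorial_mul_factorial h
  have h2 : (K.choose a : ℚ) * (a ! : ℚ) * ((K - a)! : ℚ) = (K ! : ℚ) := by
    exact_mod_cast congrArg (Nat.cast : ℕ → ℚ) h1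
  have ha : (a ! : ℚ) ≠ 0 := Nat.cast_ne_zero.2 (Nat.factorial_ne_zero a)
  have hb : ((K - a)! : ℚ) ≠ 0 := Nat.cast_ne_zero.2 (Nat.factorial_ne_zero _)
  have hc : (K ! : ℚ) ≠ 0 := Nat.cast_ne_zero.2 (Nat.factorial_ne_zero K)
  field_simp
  linarith [h2]

lemma alt_inv_factorial_sum (K : ℕ) :
    ∑ a ∈ range (K + 1), (-1 : ℚ) ^ a * ((a ! : ℚ))⁻¹ * (((K - a)! : ℚ))⁻¹
      = if K = 0 then 1 else 0 := by
  have h := Int.alternating_sum_range_choose (n := K)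
  have hq : ∑ a ∈ range (K + 1), (-1 : ℚ) ^ a * (K.choose a : ℚ)
      = if K = 0 then 1 else 0 := by
    exact_mod_cast h
  have hc : (K ! : ℚ) ≠ 0 := Nat.cast_ne_zero.2 (Nat.factorial_ne_zero K)
  have step : ∑ a ∈ range (K + 1), (-1 : ℚ) ^ a * ((a ! : ℚ))⁻¹ * (((K - a)! : ℚ))⁻¹
      = (∑ a ∈ range (K + 1), (-1 : ℚ) ^ a * (K.choose a : ℚ)) * ((K ! : ℚ))⁻¹ := by
    rw [Finset.sum_mul]
    refine Finset.sum_congr rfl fun a ha => ?_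
    rw [Finset.mem_range] at ha
    rw [mul_assoc, inv_factorial_pair K a (by omega)]
    ring
  rw [step, hq]
  rcases eq_or_ne K 0 with rfl | hK
  · simp
  · simp [if_neg hK]

-- m ≥ 2 case, m = μ+2
lemma ratsum_m2 (μ j : ℕ) :
    ∑ i ∈ range (j + 1), (((i+2)! : ℚ))⁻¹ * (((j - i)! : ℚ))⁻¹ * (-1 : ℚ) ^ (i + 2 - (μ + 2))
        * ((i+2).choose (μ+2) : ℚ)
      = if j = μ then (((μ+2)! : ℚ))⁻¹ else 0 := by
  by_cases hj : j < μ
  · rw [if_neg (by omega)]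
    refine Finset.sum_eq_zero fun i hi => ?_
    rw [Finset.mem_range] at hi
    rw [Nat.choose_eq_zero_of_lt (by omega)]
    simp
  · push_neg at hj
    obtain ⟨s, rfl⟩ : ∃ s, j = μ + s := ⟨j - μ, by omega⟩
    rw [show μ + s + 1 = μ + (s+1) by ring, Finset.sum_range_add]
    have hz : ∑ i ∈ range μ, (((i+2)! : ℚ))⁻¹ * (((μ + s - i)! : ℚ))⁻¹ * (-1:ℚ) ^ (i + 2 - (μ + 2))
        * ((i+2).choose (μ+2) : ℚ) = 0 := by
      refine Finset.sum_eq_zero fun i hi => ?_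
      rw [Finset.mem_range] at hi
      rw [Nat.choose_eq_zero_of_lt (by omega)]
      simp
    rw [hz, zero_add]
    have key : ∀ a, a < s + 1 →
        (((μ + a + 2)! : ℚ))⁻¹ * (((μ + s - (μ + a))! : ℚ))⁻¹ * (-1:ℚ) ^ (μ + a + 2 - (μ + 2))
          * ((μ + a + 2).choose (μ+2) : ℚ)
        = (((μ+2)! : ℚ))⁻¹ * ((-1:ℚ) ^ a * ((a ! : ℚ))⁻¹ * (((s - a)! : ℚ))⁻¹) := by
      intro a ha
      have e1 : μ + a + 2 - (μ + 2) = a := by omega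
      have e2 : μ + s - (μ + a) = s - a := by omega
      rw [e1, e2]
      have hch := inv_factorial_pair (μ+a+2) (μ+2) (by omega)
      rw [show μ+a+2-(μ+2) = a by omega] at hch
      linear_combination (-1:ℚ)^a * ((s-a)! : ℚ)⁻¹ * hch.symm
    calc ∑ a ∈ range (s+1), (((μ + a+2)! : ℚ))⁻¹ * (((μ + s - (μ + a))! : ℚ))⁻¹
            * (-1:ℚ) ^ (μ + a + 2 - (μ + 2)) * ((μ + a+2).choose (μ+2) : ℚ)
        = ∑ a ∈ range (s+1), (((μ+2)! : ℚ))⁻¹ * ((-1:ℚ) ^ a * ((a ! : ℚ))⁻¹ * (((s - a)! : ℚ))⁻¹) := by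
          refine Finset.sum_congr rfl fun a ha => key a (Finset.mem_range.1 ha)
      _ = (((μ+2)! : ℚ))⁻¹ * (if s = 0 then 1 else 0) := by
          rw [← Finset.mul_sum, alt_inv_factorial_sum]
      _ = if μ + s = μ then (((μ+2)! : ℚ))⁻¹ else 0 := by
          rcases Nat.eq_zero_or_pos s with h | h
          · subst h; simp
          · rw [if_neg (by omega), if_neg (by omega), mul_zero]

lemma ratsum_m1 (j : ℕ) :
    ∑ i ∈ range (j + 1), (((i+2)! : ℚ))⁻¹ * (((j - i)! : ℚ))⁻¹ * (-1 : ℚ) ^ (i + 2 - 1)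
        * ((i+2).choose 1 : ℚ)
      = -(((j+1)! : ℚ))⁻¹ := by
  have full := alt_inv_factorial_sum (j+1)
  rw [if_neg (by omega), Finset.sum_range_succ'] at full
  have hg0 : (-1:ℚ)^0 * (((0:ℕ)! : ℚ))⁻¹ * (((j+1-0)! : ℚ))⁻¹ = ((j+1)! : ℚ)⁻¹ := by
    norm_num
  rw [hg0] at full
  have step : ∑ i ∈ range (j + 1), (((i+2)! : ℚ))⁻¹ * (((j - i)! : ℚ))⁻¹ * (-1:ℚ)^(i + 2 - 1)
      * ((i+2).choose 1 : ℚ)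
      = ∑ i ∈ range (j+1), (-1:ℚ)^(i+1) * (((i+1)! : ℚ))⁻¹ * (((j+1-(i+1))! : ℚ))⁻¹ := by
    refine Finset.sum_congr rfl fun i _ => ?_
    rw [Nat.choose_one_right, show i+2-1 = i+1 by omega, show j+1-(i+1) = j - i by omega]
    have : ((i+2)! : ℚ) = (i+2) * ((i+1)! : ℚ) := by
      rw [show i+2 = (i+1)+1 by omega, Nat.factorial_succ]; push_cast; ring
    rw [this]
    have h1 : ((i+1)! : ℚ) ≠ 0 := Nat.cast_ne_zero.2 (Nat.factorial_ne_zero _)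
    have h2 : ((i:ℚ)+2) ≠ 0 := by positivity
    field_simp
    push_cast; ring
  rw [step]
  linarith [full]

lemma ratsum_m0 (j : ℕ) :
    ∑ i ∈ range (j + 1), (((i+2)! : ℚ))⁻¹ * (((j - i)! : ℚ))⁻¹ * (-1 : ℚ) ^ (i + 2 - 0)
        * ((i+2).choose 0 : ℚ)
      = ((j+1)! : ℚ)⁻¹ - ((j+2)! : ℚ)⁻¹ := by
  have full := alt_inv_factorial_sum (j+2)
  rw [if_neg (by omega), Finset.sum_range_succ', Finset.sum_range_succ'] at full
  have hg0 : (-1:ℚ)^0 * (((0:ℕ)! : ℚ))⁻¹ * (((j+2-0)! : ℚ))⁻¹ = ((j+2)! : ℚ)⁻¹ := by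
    norm_num
  have hg1 : (-1:ℚ)^(0+1) * (((0+1:ℕ)! : ℚ))⁻¹ * (((j+2-(0+1))! : ℚ))⁻¹ = -((j+1)! : ℚ)⁻¹ := by
    norm_num
  rw [hg0, hg1] at full
  have step : ∑ i ∈ range (j + 1), (((i+2)! : ℚ))⁻¹ * (((j - i)! : ℚ))⁻¹ * (-1:ℚ)^(i + 2 - 0)
      * ((i+2).choose 0 : ℚ)
      = ∑ i ∈ range (j+1), (-1:ℚ)^(i+1+1) * (((i+1+1)! : ℚ))⁻¹ * (((j+2-(i+1+1))! : ℚ))⁻¹ := by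
    refine Finset.sum_congr rfl fun i _ => ?_
    rw [Nat.choose_zero_right, show i+2-0 = i+1+1 by omega, show j+2-(i+1+1) = j - i by omega,
      show i+1+1 = i+2 by omega]
    push_cast
    ring
  rw [step]
  linarith [full]

lemma deg_mono {d1 d : ℕ →₀ ℕ} (h : d1 ≤ d) : deg d1 ≤ deg d := by
  obtain ⟨c, rfl⟩ := le_iff_exists_add.1 h
  rw [deg_add]; omega

lemma qsmul_eq_C_mul (c : ℚ) (x : MvPowerSeries ℕ ℚ) :
    c • x = MvPowerSeries.C (σ := ℕ) (R := ℚ) c * x := by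
  ext d
  rw [MvPowerSeries.coeff_smul, MvPowerSeries.coeff_C_mul]

lemma coeffS_X_sub_C_pow (a : MvPowerSeries ℕ ℚ) (M m : ℕ) :
    PowerSeries.coeff (R := MvPowerSeries ℕ ℚ) m
        ((PowerSeries.X - PowerSeries.C (R := MvPowerSeries ℕ ℚ) a) ^ M)
      = (-a) ^ (M - m) * (M.choose m : MvPowerSeries ℕ ℚ) := by
  have h1 : ((((Polynomial.X + Polynomial.C (-a)) ^ M : Polynomial (MvPowerSeries ℕ ℚ)) :
        PowerSeries (MvPowerSeries ℕ ℚ)))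
      = (PowerSeries.X - PowerSeries.C (R := MvPowerSeries ℕ ℚ) a) ^ M := by
    push_cast [Polynomial.coe_pow, Polynomial.coe_add, Polynomial.coe_X, Polynomial.coe_C]
    rw [map_neg]
    ring
  rw [← h1, Polynomial.coeff_coe, Polynomial.coeff_X_add_C_pow]

lemma scaffold (I : ℕ → MvPowerSeries ℕ ℚ)
    (h0 : constantCoeff (σ := ℕ) (R := ℚ) (I 0) = 0)
    (hIk : ∀ k : ℕ, 1 ≤ k →
      HasSum (fun p : ℕ => (p ! : ℚ)⁻¹ • (I 0 ^ p * X (p + k))) (I k))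
    (m : ℕ) (d : ℕ →₀ ℕ) :
    ∑ n ∈ range (deg d + m + 1), coeff (R := ℚ) d (((n+2)! : ℚ)⁻¹ •
        ((I (n+1) - if n = 0 then 1 else 0) * ((-(I 0))^(n+2-m)
          * ((n+2).choose m : MvPowerSeries ℕ ℚ))))
      = (∑ j ∈ range (deg d + m + 1),
          (∑ i ∈ range (j+1), ((i+2)! : ℚ)⁻¹ * (((j-i)! : ℚ))⁻¹ * (-1:ℚ)^(i+2-m)
             * ((i+2).choose m : ℚ))
          * coeff (R := ℚ) d ((I 0)^(j+2-m) * X (j+1)))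
        - (2! : ℚ)⁻¹ * coeff (R := ℚ) d ((-(I 0))^(2-m) * ((2).choose m : MvPowerSeries ℕ ℚ)) := by
  have hq0 : ∀ (e j : ℕ), deg d < e → coeff (R := ℚ) d ((I 0) ^ e * X j) = 0 := fun e j h =>
    coeff_pow_mul_eq_zero h0 e _ d h
  set u := I 0 with hu
  set D := deg d with hD
  set N := D + m + 1 with hN
  have hIJ : ∀ (n : ℕ) (d1 : ℕ →₀ ℕ), d1 ≤ d →
      coeff (R := ℚ) d1 (I (n+1))
        = coeff (R := ℚ) d1 (∑ p ∈ range N, (p ! : ℚ)⁻¹ • (u ^ p * X (p + (n+1)))) := by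
    intro n d1 hd1
    have hde : deg d1 ≤ D := deg_mono hd1
    rw [hasSum_coeff_eq (hIk (n+1) (by omega)) d1 N ?_, map_sum]
    intro p hp
    rw [coeff_smul, coeff_pow_mul_eq_zero h0 p _ d1 (by omega), mul_zero]
  have hnorm : ∀ (p j e c : ℕ),
      coeff (R := ℚ) d ((u^p * X j) * ((-u)^e * (c : MvPowerSeries ℕ ℚ)))
        = (-1:ℚ)^e * (c:ℚ) * coeff (R := ℚ) d (u^(p+e) * X j) := by
    intro p j e c
    have h1 : (u^p * X j) * ((-u)^e * (c : MvPowerSeries ℕ ℚ))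
        = MvPowerSeries.C (σ := ℕ) (R := ℚ) ((-1:ℚ)^e * (c:ℚ)) * (u^(p+e) * X j) := by
      rw [neg_pow, map_mul, map_pow, map_neg, map_one, map_natCast, pow_add]
      ring
    rw [h1, MvPowerSeries.coeff_C_mul]
  have hstep : ∀ n : ℕ,
      coeff (R := ℚ) d (((n+2)! : ℚ)⁻¹ • ((I (n+1) - if n = 0 then 1 else 0)
          * ((-u)^(n+2-m) * ((n+2).choose m : MvPowerSeries ℕ ℚ))))
      = (∑ p ∈ range N, ((n+2)! : ℚ)⁻¹ * ((p ! : ℚ)⁻¹ * ((-1:ℚ)^(n+2-m)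
            * ((n+2).choose m : ℚ) * coeff (R := ℚ) d (u^(p+(n+2-m)) * X (p+n+1)))))
        - ((n+2)! : ℚ)⁻¹ * coeff (R := ℚ) d ((if n = 0 then 1 else 0)
            * ((-u)^(n+2-m) * ((n+2).choose m : MvPowerSeries ℕ ℚ))) := by
    intro n
    rw [coeff_smul]
    have e1 : coeff (R := ℚ) d ((I (n+1) - if n = 0 then 1 else 0)
          * ((-u)^(n+2-m) * ((n+2).choose m : MvPowerSeries ℕ ℚ)))
        = coeff (R := ℚ) d (((∑ p ∈ range N, (p ! : ℚ)⁻¹ • (u ^ p * X (p + (n+1))))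
            - if n = 0 then 1 else 0)
          * ((-u)^(n+2-m) * ((n+2).choose m : MvPowerSeries ℕ ℚ))) := by
      apply coeff_mul_congr
      intro d1 hd1
      rw [map_sub, map_sub, hIJ n d1 hd1]
    rw [e1, sub_mul, map_sub, Finset.sum_mul, map_sum, mul_sub]
    congr 1
    rw [Finset.mul_sum]
    refine Finset.sum_congr rfl fun p _ => ?_
    rw [smul_mul_assoc, coeff_smul, show p + (n+1) = p + n + 1 by omega,
      hnorm p (p+n+1) (n+2-m) ((n+2).choose m)]
  have hgz : ∀ n p : ℕ, N ≤ n + p →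
      ((n+2)! : ℚ)⁻¹ * ((p ! : ℚ)⁻¹ * ((-1:ℚ)^(n+2-m)
        * ((n+2).choose m : ℚ) * coeff (R := ℚ) d (u^(p+(n+2-m)) * X (p+n+1)))) = 0 := by
    intro n p h
    by_cases hm : m ≤ n + 2
    · rw [hq0 (p+(n+2-m)) (p+n+1) (by omega)]; ring
    · rw [Nat.choose_eq_zero_of_lt (by omega), Nat.cast_zero]; ring
  have htot := Finset.sum_congr (rfl : range N = range N) fun n _ => hstep n
  rw [htot, Finset.sum_sub_distrib]
  congr 1
  · rw [sum_sq_eq_sum_antidiagonal N (fun n p => ((n+2)! : ℚ)⁻¹ * ((p ! : ℚ)⁻¹ * ((-1:ℚ)^(n+2-m)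
      * ((n+2).choose m : ℚ) * coeff (R := ℚ) d (u^(p+(n+2-m)) * X (p+n+1))))) hgz]
    refine Finset.sum_congr rfl fun j hj => ?_
    rw [Finset.sum_mul]
    refine Finset.sum_congr rfl fun i hi => ?_
    rw [Finset.mem_range] at hi hj
    by_cases hm : m ≤ i + 2
    · rw [show (j-i) + (i+2-m) = j+2-m by omega, show j - i + i + 1 = j + 1 by omega]
      ring
    · rw [Nat.choose_eq_zero_of_lt (by omega), Nat.cast_zero]
      ring
  · have hc := Finset.sum_eq_single_of_mem (s := range N)
      (f := fun n => ((n+2)! : ℚ)⁻¹ * coeff (R := ℚ) d ((if n = 0 then (1 : MvPowerSeries ℕ ℚ) else 0)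
        * ((-u)^(n+2-m) * ((n+2).choose m : MvPowerSeries ℕ ℚ))))
      0 (Finset.mem_range.2 (by omega)) ?_
    · rw [hc]
      norm_num
    · intro n _ hn
      simp only [if_neg hn, zero_mul, map_zero, mul_zero]

lemma head_case2 (I : ℕ → MvPowerSeries ℕ ℚ)
    (h0 : constantCoeff (σ := ℕ) (R := ℚ) (I 0) = 0)
    (hIk : ∀ k : ℕ, 1 ≤ k →
      HasSum (fun p : ℕ => (p ! : ℚ)⁻¹ • (I 0 ^ p * X (p + k))) (I k))
    (μ : ℕ) (d : ℕ →₀ ℕ) :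
    ∑ n ∈ range (deg d + (μ+2) + 1), coeff (R := ℚ) d (((n+2)! : ℚ)⁻¹ •
        ((I (n+1) - if n = 0 then 1 else 0) * ((-(I 0))^(n+2-(μ+2))
          * ((n+2).choose (μ+2) : MvPowerSeries ℕ ℚ))))
      = ((μ+2)! : ℚ)⁻¹ * coeff (R := ℚ) d (X (μ+1))
        - (2! : ℚ)⁻¹ * coeff (R := ℚ) d (((2).choose (μ+2) : MvPowerSeries ℕ ℚ)) := by
  rw [scaffold I h0 hIk (μ+2) d]
  congr 1
  · have h1 : ∀ j ∈ range (deg d + (μ+2) + 1),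
        (∑ i ∈ range (j+1), ((i+2)! : ℚ)⁻¹ * (((j-i)! : ℚ))⁻¹ * (-1:ℚ)^(i+2-(μ+2))
           * ((i+2).choose (μ+2) : ℚ))
          * coeff (R := ℚ) d ((I 0)^(j+2-(μ+2)) * X (j+1))
        = if j = μ then ((μ+2)! : ℚ)⁻¹ * coeff (R := ℚ) d ((I 0)^(j+2-(μ+2)) * X (j+1)) else 0 := by
      intro j _
      rw [ratsum_m2 μ j, ite_mul, zero_mul]
    rw [Finset.sum_congr rfl h1, Finset.sum_ite_eq' (range (deg d + (μ+2) + 1)) μ,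
      if_pos (Finset.mem_range.2 (by omega)), show μ+2-(μ+2) = 0 by omega, pow_zero, one_mul]
  · rw [show 2-(μ+2) = 0 by omega, pow_zero, one_mul]

lemma head_case1 (I : ℕ → MvPowerSeries ℕ ℚ)
    (h0 : constantCoeff (σ := ℕ) (R := ℚ) (I 0) = 0)
    (hI0 : HasSum (fun n : ℕ => (n ! : ℚ)⁻¹ • (X n * I 0 ^ n)) (I 0))
    (hIk : ∀ k : ℕ, 1 ≤ k →
      HasSum (fun p : ℕ => (p ! : ℚ)⁻¹ • (I 0 ^ p * X (p + k))) (I k))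
    (d : ℕ →₀ ℕ) :
    ∑ n ∈ range (deg d + 1 + 1), coeff (R := ℚ) d (((n+2)! : ℚ)⁻¹ •
        ((I (n+1) - if n = 0 then 1 else 0) * ((-(I 0))^(n+2-1)
          * ((n+2).choose 1 : MvPowerSeries ℕ ℚ))))
      = coeff (R := ℚ) d (X 0) := by
  have hq0 : ∀ (e j : ℕ), deg d < e → coeff (R := ℚ) d ((I 0) ^ e * X j) = 0 := fun e j h =>
    coeff_pow_mul_eq_zero h0 e _ d h
  rw [scaffold I h0 hIk 1 d]
  set D := deg d with hD
  -- evaluate the fiber coefficients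
  have h1 : ∀ j ∈ range (D + 1 + 1),
      (∑ i ∈ range (j+1), ((i+2)! : ℚ)⁻¹ * (((j-i)! : ℚ))⁻¹ * (-1:ℚ)^(i+2-1)
         * ((i+2).choose 1 : ℚ))
        * coeff (R := ℚ) d ((I 0)^(j+2-1) * X (j+1))
      = -(((j+1)! : ℚ)⁻¹ * coeff (R := ℚ) d ((I 0)^(j+1) * X (j+1))) := by
    intro j _
    rw [ratsum_m1 j, show j+2-1 = j+1 by omega]
    ring
  rw [Finset.sum_congr rfl h1]
  -- the correction term
  have h2 : (2! : ℚ)⁻¹ * coeff (R := ℚ) d ((-(I 0))^(2-1) * ((2).choose 1 : MvPowerSeries ℕ ℚ))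
      = -(coeff (R := ℚ) d (I 0)) := by
    have he : (-(I 0))^(2-1) * (((2).choose 1 : ℕ) : MvPowerSeries ℕ ℚ)
        = MvPowerSeries.C (σ := ℕ) (R := ℚ) (-2 : ℚ) * I 0 := by
      rw [show (2:ℕ).choose 1 = 2 from rfl, pow_one, show ((-2 : ℚ)) = ((-2 : ℤ) : ℚ) by norm_num,
        map_intCast]
      push_cast
      ring
    rw [he, MvPowerSeries.coeff_C_mul, show (2! : ℚ) = 2 from by norm_num]
    ring
  rw [h2]
  -- the string equation
  have hu0 : coeff (R := ℚ) d (I 0) = ∑ n ∈ range (D + 1 + 1), (n ! : ℚ)⁻¹ * coeff (R := ℚ) d ((I 0)^n * X n) := by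
    have ht : ∀ n, D + 1 + 1 ≤ n → coeff (R := ℚ) d ((n ! : ℚ)⁻¹ • (X n * I 0 ^ n)) = 0 := by
      intro n hn
      rw [coeff_smul, mul_comm (X n), hq0 n n (by omega), mul_zero]
    rw [hasSum_coeff_eq hI0 d (D + 1 + 1) ht]
    refine Finset.sum_congr rfl fun n _ => ?_
    rw [coeff_smul, mul_comm (X n)]
  rw [Finset.sum_range_succ', pow_zero, Nat.factorial_zero] at hu0
  norm_num at hu0
  -- kill the top term of the main sum
  rw [Finset.sum_range_succ, hq0 (D+1+1) (D+1+1) (by omega), mul_zero, neg_zero, add_zero,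
    Finset.sum_neg_distrib]
  linarith [hu0]

lemma head_case0 (I : ℕ → MvPowerSeries ℕ ℚ) (Im1 : MvPowerSeries ℕ ℚ)
    (h0 : constantCoeff (σ := ℕ) (R := ℚ) (I 0) = 0)
    (hI0 : HasSum (fun n : ℕ => (n ! : ℚ)⁻¹ • (X n * I 0 ^ n)) (I 0))
    (hIk : ∀ k : ℕ, 1 ≤ k →
      HasSum (fun p : ℕ => (p ! : ℚ)⁻¹ • (I 0 ^ p * X (p + k))) (I k))
    (hIm1 : HasSum (fun n : ℕ => (((n + 1)! : ℚ))⁻¹ • (X n * I 0 ^ (n + 1)))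
      (Im1 + (2 : ℚ)⁻¹ • I 0 ^ 2))
    (d : ℕ →₀ ℕ) :
    ∑ n ∈ range (deg d + 0 + 1), coeff (R := ℚ) d (((n+2)! : ℚ)⁻¹ •
        ((I (n+1) - if n = 0 then 1 else 0) * ((-(I 0))^(n+2-0)
          * ((n+2).choose 0 : MvPowerSeries ℕ ℚ))))
      = -(coeff (R := ℚ) d Im1) := by
  have hq0 : ∀ (e j : ℕ), deg d < e → coeff (R := ℚ) d ((I 0) ^ e * X j) = 0 := fun e j h =>
    coeff_pow_mul_eq_zero h0 e _ d h
  rw [scaffold I h0 hIk 0 d]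
  set D := deg d with hD
  have h1 : ∀ j ∈ range (D + 0 + 1),
      (∑ i ∈ range (j+1), ((i+2)! : ℚ)⁻¹ * (((j-i)! : ℚ))⁻¹ * (-1:ℚ)^(i+2-0)
         * ((i+2).choose 0 : ℚ))
        * coeff (R := ℚ) d ((I 0)^(j+2-0) * X (j+1))
      = ((j+1)! : ℚ)⁻¹ * coeff (R := ℚ) d ((I 0)^(j+2) * X (j+1))
        - ((j+2)! : ℚ)⁻¹ * coeff (R := ℚ) d ((I 0)^(j+2) * X (j+1)) := by
    intro j _
    rw [ratsum_m0 j, show j+2-0 = j+2 from rfl]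
    ring
  rw [Finset.sum_congr rfl h1]
  have h2 : (2! : ℚ)⁻¹ * coeff (R := ℚ) d ((-(I 0))^(2-0) * ((2).choose 0 : MvPowerSeries ℕ ℚ))
      = (2:ℚ)⁻¹ * coeff (R := ℚ) d ((I 0)^2) := by
    rw [show (2:ℕ)-0 = 2 from rfl, show (2:ℕ).choose 0 = 1 from rfl, Nat.cast_one, mul_one,
      neg_sq, show (2! : ℚ) = 2 from by norm_num]
  rw [h2]
  -- hIm1 extraction
  have hA : coeff (R := ℚ) d Im1 + (2:ℚ)⁻¹ * coeff (R := ℚ) d ((I 0)^2)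
      = ∑ n ∈ range (D + 0 + 1), ((n+1)! : ℚ)⁻¹ * coeff (R := ℚ) d ((I 0)^(n+1) * X n) := by
    have ht : ∀ n, D + 0 + 1 ≤ n →
        coeff (R := ℚ) d ((((n + 1)! : ℚ))⁻¹ • (X n * I 0 ^ (n + 1))) = 0 := by
      intro n hn
      rw [coeff_smul, mul_comm (X n), hq0 (n+1) n (by omega), mul_zero]
    have := hasSum_coeff_eq hIm1 d (D + 0 + 1) ht
    rw [map_add, coeff_smul] at this
    rw [this]
    refine Finset.sum_congr rfl fun n _ => ?_
    rw [coeff_smul, mul_comm (X n)]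
  -- u^2 congruence
  have hB : coeff (R := ℚ) d ((I 0)^2)
      = ∑ n ∈ range (D + 0 + 1), (n ! : ℚ)⁻¹ * coeff (R := ℚ) d ((I 0)^(n+1) * X n) := by
    have hcong : ∀ d1, d1 ≤ d → coeff (R := ℚ) d1 (I 0)
        = coeff (R := ℚ) d1 (∑ n ∈ range (D + 0 + 1), (n ! : ℚ)⁻¹ • (X n * (I 0)^n)) := by
      intro d1 hd1
      have hde : deg d1 ≤ D := deg_mono hd1
      have ht : ∀ n, D + 0 + 1 ≤ n → coeff (R := ℚ) d1 ((n ! : ℚ)⁻¹ • (X n * I 0 ^ n)) = 0 := by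
        intro n hn
        rw [coeff_smul, mul_comm (X n), coeff_pow_mul_eq_zero h0 n _ d1 (by omega), mul_zero]
      rw [hasSum_coeff_eq hI0 d1 (D + 0 + 1) ht, map_sum]
    rw [pow_two, coeff_mul_congr d hcong, Finset.sum_mul, map_sum]
    refine Finset.sum_congr rfl fun n _ => ?_
    rw [smul_mul_assoc, coeff_smul, show (X n * (I 0)^n) * I 0 = (I 0)^(n+1) * X n by
      rw [pow_succ]; ring]
  -- expand the boundary terms
  rw [Finset.sum_range_succ'] at hA hB
  simp only [show ∀ k:ℕ, k+1+1 = k+2 from fun _ => rfl] at hA hB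
  norm_num at hA hB
  rw [Finset.sum_sub_distrib, show D+0+1 = D+1 from rfl, Finset.sum_range_succ,
    Finset.sum_range_succ (fun j => ((j+2)! : ℚ)⁻¹ * coeff (R := ℚ) d ((I 0)^(j+2) * X (j+1))),
    hq0 (D+2) (D+1) (by omega)]
  ring_nf at hA hB ⊢
  linarith [hA, hB]

end LG

/-- Let `I₀` solve `I₀ = ∑_{n≥0} (tₙ/n!) I₀ⁿ`, let `I_k = ∑_{p≥0} (I₀^p/p!) t_{p+k}` for
`k ≥ 1`, and let `I₋₁ = ∑_{n≥0} tₙ I₀^{n+1}/(n+1)! - (1/2) I₀²`.  Then, as an identity of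
formal power series in `v`,
`-(1/2)v² + ∑_{n≥0} tₙ v^{n+1}/(n+1)! = I₋₁ + ∑_{n≥1} (Iₙ - δ_{n,1}) (v-I₀)^{n+1}/(n+1)!`. -/
theorem landau_ginzburg_potential_renormalized (I : ℕ → MvPowerSeries ℕ ℚ)
    (Im1 : MvPowerSeries ℕ ℚ)
    (h0 : MvPowerSeries.constantCoeff (σ := ℕ) (R := ℚ) (I 0) = 0)
    (hI0 : HasSum (fun n : ℕ => (n ! : ℚ)⁻¹ • (MvPowerSeries.X n * I 0 ^ n)) (I 0))
    (hIk : ∀ k : ℕ, 1 ≤ k →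
      HasSum (fun p : ℕ => (p ! : ℚ)⁻¹ • (I 0 ^ p * MvPowerSeries.X (p + k))) (I k))
    (hIm1 : HasSum (fun n : ℕ => (((n + 1)! : ℚ))⁻¹ • (MvPowerSeries.X n * I 0 ^ (n + 1)))
      (Im1 + (2 : ℚ)⁻¹ • I 0 ^ 2)) :
    ∃ L Rh : PowerSeries (MvPowerSeries ℕ ℚ),
      HasSum (fun n : ℕ => (((n + 1)! : ℚ))⁻¹ •
        (PowerSeries.C (R := MvPowerSeries ℕ ℚ) (MvPowerSeries.X n) * PowerSeries.X ^ (n + 1))) L ∧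
      HasSum (fun n : ℕ => (((n + 2)! : ℚ))⁻¹ •
        (PowerSeries.C (R := MvPowerSeries ℕ ℚ) (I (n + 1) - if n = 0 then 1 else 0) *
          (PowerSeries.X - PowerSeries.C (R := MvPowerSeries ℕ ℚ) (I 0)) ^ (n + 2))) Rh ∧
      -((2 : ℚ)⁻¹ • PowerSeries.X ^ 2) + L
        = PowerSeries.C (R := MvPowerSeries ℕ ℚ) Im1 + Rh := by
  classical
  set Lc : ℕ → MvPowerSeries ℕ ℚ :=
    fun m => if m = 0 then 0 else (m ! : ℚ)⁻¹ • MvPowerSeries.X (m-1) with hLc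
  refine ⟨PowerSeries.mk Lc,
    -((2:ℚ)⁻¹ • PowerSeries.X^2) + PowerSeries.mk Lc - PowerSeries.C Im1, ?_, ?_, by ring⟩
  · -- the linear part
    apply LG.hasSumS
    intro m d
    refine ⟨m, ?_, ?_⟩
    · intro n hn
      rw [PowerSeries.coeff_smul, PowerSeries.coeff_C_mul, PowerSeries.coeff_X_pow,
        if_neg (by omega : ¬ m = n+1), mul_zero, smul_zero, map_zero]
    · rw [PowerSeries.coeff_mk]
      cases m with
      | zero => simp [hLc]
      | succ k =>
        rw [hLc]
        simp only [Nat.add_sub_cancel, if_neg (Nat.succ_ne_zero k)]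
        rw [Finset.sum_eq_single_of_mem k (Finset.mem_range.2 (by omega)) ?_]
        · rw [PowerSeries.coeff_smul, PowerSeries.coeff_C_mul, PowerSeries.coeff_X_pow,
            if_pos rfl, mul_one]
        · intro n _ hn
          rw [PowerSeries.coeff_smul, PowerSeries.coeff_C_mul, PowerSeries.coeff_X_pow,
            if_neg (by omega), mul_zero, smul_zero, map_zero]
  · -- the renormalized part
    apply LG.hasSumS
    intro m d
    have hc : ∀ n : ℕ, PowerSeries.coeff (R := MvPowerSeries ℕ ℚ) m ((((n + 2)! : ℚ))⁻¹ •
        (PowerSeries.C (R := MvPowerSeries ℕ ℚ) (I (n + 1) - if n = 0 then 1 else 0) *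
          (PowerSeries.X - PowerSeries.C (R := MvPowerSeries ℕ ℚ) (I 0)) ^ (n + 2)))
        = ((n+2)! : ℚ)⁻¹ • ((I (n+1) - if n = 0 then 1 else 0) *
            ((-(I 0))^(n+2-m) * ((n+2).choose m : MvPowerSeries ℕ ℚ))) := by
      intro n
      rw [PowerSeries.coeff_smul, PowerSeries.coeff_C_mul, LG.coeffS_X_sub_C_pow]
    refine ⟨LG.deg d + m + 1, ?_, ?_⟩
    · intro n hn
      rw [hc n, MvPowerSeries.coeff_smul]
      have he : (I (n+1) - if n = 0 then 1 else 0) *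
          ((-(I 0))^(n+2-m) * ((n+2).choose m : MvPowerSeries ℕ ℚ))
          = (I 0)^(n+2-m) * ((-1 : MvPowerSeries ℕ ℚ)^(n+2-m) *
              ((I (n+1) - if n = 0 then 1 else 0) * ((n+2).choose m : MvPowerSeries ℕ ℚ))) := by
        rw [neg_pow]
        ring
      rw [he, LG.coeff_pow_mul_eq_zero h0 (n+2-m) _ d (by omega), mul_zero]
    · simp only [hc]
      have hRm : PowerSeries.coeff (R := MvPowerSeries ℕ ℚ) m
          (-((2:ℚ)⁻¹ • PowerSeries.X^2) + PowerSeries.mk Lc - PowerSeries.C Im1)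
          = -((2:ℚ)⁻¹ • (if m = 2 then 1 else 0)) + Lc m - (if m = 0 then Im1 else 0) := by
        rw [map_sub, map_add, map_neg, PowerSeries.coeff_smul, PowerSeries.coeff_X_pow,
          PowerSeries.coeff_mk, PowerSeries.coeff_C]
      rw [hRm]
      match m with
      | 0 =>
        rw [LG.head_case0 I Im1 h0 hI0 hIk hIm1 d]
        simp [hLc]
      | 1 =>
        rw [LG.head_case1 I h0 hI0 hIk d]
        simp [hLc, MvPowerSeries.coeff_smul]
      | (Nat.succ (Nat.succ μ)) =>
        rw [LG.head_case2 I h0 hIk μ d]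
        match μ with
        | 0 =>
          simp [hLc, MvPowerSeries.coeff_smul, map_add, map_neg, Nat.succ_eq_add_one]
          ring
        | (Nat.succ ν) =>
          simp [hLc, MvPowerSeries.coeff_smul, Nat.succ_eq_add_one,
            Nat.choose_eq_zero_of_lt (show 2 < ν+1+2 by omega)]

end
end

section
/- Let I_0, I_1, I_2, ... be the Itzykson-Zuber variables, defined as formal power series in t_0, t_1, ..., satisfying I_0 = ∑_n (t_n/n!)I_0^n and I_k = ∑_p (I_0^p/p!) t_{p+k}. Then ∂I_0/∂t_0 = 1/(1 - I_1) and ∂I_l/∂t_0 = I_{l+1}/(1 - I_1) for l ≥ 1. -/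
open scoped Nat

noncomputable section

/-- The formal partial derivative `∂/∂t_i` on `ℚ[[t₀, t₁, …]]` (with `t_n = X n`). -/
def pd (i : ℕ) (f : MvPowerSeries ℕ ℚ) : MvPowerSeries ℕ ℚ :=
  fun s => ((s i : ℚ) + 1) * MvPowerSeries.coeff (R := ℚ) (s + Finsupp.single i 1) f

/-! Differentiating the defining series term by term, the `p = 0` term `t_k` of `I_k` contributes
`δ_{k0}`, and for `p ≥ 1` the chain rule turns `I₀^p t_{p+k} / p!` into
`(I₀^{p-1} t_{p+k} / (p-1)!) ∂₀I₀`, a summand of `I_{k+1}`. Hence `∂₀I_k = δ_{k0} + I_{k+1} ∂₀I₀`;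
for `k = 0` this reads `(1 - I₁) ∂₀I₀ = 1`, and `1 - I₁` is invertible since `I₁` has no constant
term (every summand contains some `t_{p+1}`). -/

open MvPowerSeries

namespace MvPowerSeries.WithPiTopology

variable {σ R : Type*} [TopologicalSpace R]

theorem continuous_pderiv [CommSemiring R] [IsTopologicalSemiring R] (i : σ) :
    Continuous (pderiv R i) :=
  continuous_pi fun d => by
    change Continuous fun f => coeff d (pderiv R i f)
    simp_rw [coeff_pderiv]
    exact (continuous_coeff R _).mul continuous_const

theorem constantCoeff_eq_zero_of_hasSum [Semiring R] [T2Space R] {ι : Type*}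
    {f : ι → MvPowerSeries σ R} {S : MvPowerSeries σ R} (h : HasSum f S)
    (hf : ∀ n, constantCoeff (f n) = 0) : constantCoeff S = 0 :=
  (h.map constantCoeff (continuous_constantCoeff R)).unique (by simp [Function.comp_def, hf])

theorem hasSum_pderiv [CommSemiring R] [IsTopologicalSemiring R] {ι : Type*}
    {f : ι → MvPowerSeries σ R} {S : MvPowerSeries σ R} (h : HasSum f S) (i : σ) :
    HasSum (fun n => pderiv R i (f n)) (pderiv R i S) :=
  h.map (pderiv R i) (continuous_pderiv i)

end MvPowerSeries.WithPiTopology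

-- The topology of `MvPowerSeries ℕ ℚ` is definitionally `WithPiTopology`'s.
instance : IsTopologicalRing (MvPowerSeries ℕ ℚ) :=
  WithPiTopology.instIsTopologicalRing ℕ ℚ

instance : T2Space (MvPowerSeries ℕ ℚ) :=
  WithPiTopology.instT2Space

theorem pd_eq_pderiv (i : ℕ) (f : MvPowerSeries ℕ ℚ) : pd i f = pderiv ℚ i f := by
  ext s
  rw [coeff_pderiv, mul_comm]
  rfl

def izSummand (J : MvPowerSeries ℕ ℚ) (k n : ℕ) : MvPowerSeries ℕ ℚ :=
  (n ! : ℚ)⁻¹ • (J ^ n * X (n + k))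

theorem pderiv_izSummand_zero (J : MvPowerSeries ℕ ℚ) (k : ℕ) :
    pderiv ℚ 0 (izSummand J k 0) = if k = 0 then 1 else 0 := by
  split_ifs with hk <;> simp [izSummand, hk]

theorem pderiv_izSummand_succ (J : MvPowerSeries ℕ ℚ) (k n : ℕ) :
    pderiv ℚ 0 (izSummand J k (n + 1)) = izSummand J (k + 1) n * pderiv ℚ 0 J := by
  have hfact : ((n + 1)! : ℚ)⁻¹ * (n + 1 : ℕ) = (n ! : ℚ)⁻¹ := by
    rw [Nat.factorial_succ]
    push_cast
    field_simp
  rw [izSummand, izSummand, Derivation.map_smul, Derivation.leibniz, Derivation.leibniz_pow,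
    pderiv_X_of_ne (by omega : n + 1 + k ≠ 0), smul_zero, zero_add, Nat.add_sub_cancel,
    ← Nat.cast_smul_eq_nsmul ℚ, show n + 1 + k = n + (k + 1) by omega]
  simp only [smul_eq_mul, smul_mul_assoc, mul_smul_comm, smul_smul, hfact]
  congr 1
  ring

theorem pderiv_eq_of_hasSum_izSummand {J S T : MvPowerSeries ℕ ℚ} {k : ℕ}
    (hS : HasSum (izSummand J k) S) (hT : HasSum (izSummand J (k + 1)) T) :
    pderiv ℚ 0 S = (if k = 0 then 1 else 0) + T * pderiv ℚ 0 J := by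
  have hshift : HasSum (fun n => pderiv ℚ 0 (izSummand J k (n + 1))) (T * pderiv ℚ 0 J) := by
    simpa only [pderiv_izSummand_succ] using hT.mul_right (pderiv ℚ 0 J)
  have hsum : HasSum (fun n => pderiv ℚ 0 (izSummand J k n)) (pderiv ℚ 0 S) :=
    WithPiTopology.hasSum_pderiv (σ := ℕ) (R := ℚ) hS 0
  refine hsum.unique ?_
  simpa [Finset.sum_range_one, pderiv_izSummand_zero, add_comm] using
    (hasSum_nat_add_iff (f := fun n => pderiv ℚ 0 (izSummand J k n)) 1).mp hshift

theorem constantCoeff_eq_zero_of_hasSum_izSummand {J S : MvPowerSeries ℕ ℚ} {k : ℕ}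
    (hS : HasSum (izSummand J (k + 1)) S) : constantCoeff S = 0 :=
  WithPiTopology.constantCoeff_eq_zero_of_hasSum hS fun n => by simp [izSummand]

theorem itzykson_zuber_deriv_t0_general (I : ℕ → MvPowerSeries ℕ ℚ)
    (hI0 : HasSum (fun n : ℕ => (n ! : ℚ)⁻¹ • (MvPowerSeries.X n * I 0 ^ n)) (I 0))
    (hIk : ∀ k : ℕ, 1 ≤ k →
      HasSum (fun p : ℕ => (p ! : ℚ)⁻¹ • (I 0 ^ p * MvPowerSeries.X (p + k))) (I k)) :
    pd 0 (I 0) = (1 - I 1)⁻¹ ∧ ∀ l : ℕ, 1 ≤ l → pd 0 (I l) = I (l + 1) * (1 - I 1)⁻¹ := by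
  have hI0' : HasSum (izSummand (I 0) 0) (I 0) := by
    convert hI0 using 2 with n
    rw [izSummand, add_zero, mul_comm]
  have hI1 : constantCoeff (I 1) = 0 := constantCoeff_eq_zero_of_hasSum_izSummand (hIk 1 le_rfl)
  have hD : pd 0 (I 0) = (1 - I 1)⁻¹ := by
    have h := pderiv_eq_of_hasSum_izSummand hI0' (hIk 1 le_rfl)
    rw [if_pos rfl] at h
    rw [pd_eq_pderiv, MvPowerSeries.eq_inv_iff_mul_eq_one (by simp [hI1])]
    linear_combination h
  refine ⟨hD, fun l hl => ?_⟩
  rw [pd_eq_pderiv, pderiv_eq_of_hasSum_izSummand (hIk l hl) (hIk (l + 1) (by omega)),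
    if_neg (by omega), zero_add, ← hD, pd_eq_pderiv]

/-- Let `I₀, I₁, I₂, …` be the Itzykson–Zuber variables in `ℚ[[t₀, t₁, …]]`, satisfying
`I₀ = ∑ₙ (tₙ/n!) I₀ⁿ` and `I_k = ∑_p (I₀^p/p!) t_{p+k}`.  Then `∂I₀/∂t₀ = 1/(1-I₁)` and
`∂I_l/∂t₀ = I_{l+1}/(1-I₁)` for `l ≥ 1`. -/
theorem itzykson_zuber_deriv_t0 (I : ℕ → MvPowerSeries ℕ ℚ)
    (h0 : MvPowerSeries.constantCoeff (σ := ℕ) (R := ℚ) (I 0) = 0)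
    (hI0 : HasSum (fun n : ℕ => (n ! : ℚ)⁻¹ • (MvPowerSeries.X n * I 0 ^ n)) (I 0))
    (hIk : ∀ k : ℕ, 1 ≤ k →
      HasSum (fun p : ℕ => (p ! : ℚ)⁻¹ • (I 0 ^ p * MvPowerSeries.X (p + k))) (I k)) :
    pd 0 (I 0) = (1 - I 1)⁻¹ ∧ ∀ l : ℕ, 1 ≤ l → pd 0 (I l) = I (l + 1) * (1 - I 1)⁻¹ :=
  itzykson_zuber_deriv_t0_general I hI0 hIk

end
end

section
/- Define the loop operator ∇(x) = ∑_{n≥0} ((2n+1)!!/x^{n+3/2}) ∂/∂t_n acting on formal power series in t_0, t_1, .... In the Itzykson-Zuber coordinates it equals (x - 2I_0)^{-3/2} (1/(1-I_1)) ∂/∂I_0 + ∑_{l≥1} [ (x-2I_0)^{-3/2} I_{l+1}/(1-I_1) + (2l+1)!!(x-2I_0)^{-(2l+3)/2} ] ∂/∂I_l, where (x - 2I_0)^{-(2m+1)/2} is interpreted as x^{-(2m+1)/2}(1 - 2I_0/x)^{-(2m+1)/2} expanded as a power series in 1/x. -/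
open scoped Nat

noncomputable section

open MvPowerSeries Finsupp

instance inst_s11 : T2Space (MvPowerSeries ℕ ℚ) :=
  inferInstanceAs (T2Space ((ℕ →₀ ℕ) → ℚ))

instance : ContinuousAdd (MvPowerSeries ℕ ℚ) :=
  inferInstanceAs (ContinuousAdd ((ℕ →₀ ℕ) → ℚ))

lemma pd_coeff (i : ℕ) (f : MvPowerSeries ℕ ℚ) (s : ℕ →₀ ℕ) :
    coeff (R := ℚ) s (pd i f) = ((s i : ℚ) + 1) * coeff (R := ℚ) (s + single i 1) f := rfl

lemma pd_add (i : ℕ) (f g : MvPowerSeries ℕ ℚ) : pd i (f + g) = pd i f + pd i g := by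
  ext s; rw [pd_coeff, map_add, map_add, pd_coeff, pd_coeff]; ring

lemma pd_smul (i : ℕ) (c : ℚ) (f : MvPowerSeries ℕ ℚ) : pd i (c • f) = c • pd i f := by
  ext s; rw [pd_coeff, map_smul, map_smul, pd_coeff]; simp; ring

lemma sum_antidiag_shift (i : ℕ) (s : ℕ →₀ ℕ) (F : (ℕ →₀ ℕ) → (ℕ →₀ ℕ) → ℚ) :
    ∑ p ∈ Finset.HasAntidiagonal.antidiagonal (s + single i 1), (((p.1 : ℕ →₀ ℕ)) i : ℚ) * F p.1 p.2
      = ∑ p ∈ Finset.HasAntidiagonal.antidiagonal s, (((p.1 : ℕ →₀ ℕ)) i + 1 : ℚ) * F (p.1 + single i 1) p.2 := by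
  classical
  rw [← Finset.sum_filter_add_sum_filter_not (Finset.HasAntidiagonal.antidiagonal (s + single i 1))
    (fun p => (p.1 : ℕ →₀ ℕ) i ≠ 0)]
  have h2 : ∑ p ∈ (Finset.HasAntidiagonal.antidiagonal (s + single i 1)).filter
      (fun p => ¬ (p.1 : ℕ →₀ ℕ) i ≠ 0), ((p.1 : ℕ →₀ ℕ) i : ℚ) * F p.1 p.2 = 0 := by
    apply Finset.sum_eq_zero
    intro p hp
    simp only [Finset.mem_filter, not_not] at hp
    rw [hp.2]; simp
  rw [h2, add_zero]
  symm
  apply Finset.sum_nbij' (fun p => (p.1 + single i 1, p.2)) (fun p => (p.1 - single i 1, p.2))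
  · intro p hp
    simp only [Finset.HasAntidiagonal.mem_antidiagonal] at hp
    simp only [Finset.mem_filter, Finset.HasAntidiagonal.mem_antidiagonal, ne_eq]
    refine ⟨by rw [← hp]; abel, by simp⟩
  · intro p hp
    simp only [Finset.mem_filter, Finset.HasAntidiagonal.mem_antidiagonal, not_not, ne_eq] at hp
    have hle : single i 1 ≤ p.1 := by
      rw [single_le_iff]; omega
    rw [Finset.HasAntidiagonal.mem_antidiagonal]
    have h3 : p.1 - single i 1 + single i 1 = p.1 := tsub_add_cancel_of_le hle
    have : p.1 - single i 1 + p.2 + single i 1 = s + single i 1 := by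
      rw [add_right_comm, h3, hp.1]
    exact add_right_cancel this
  · intro p hp; simp
  · intro p hp
    simp only [Finset.mem_filter, not_not, ne_eq] at hp
    have hle : single i 1 ≤ p.1 := by rw [single_le_iff]; omega
    simp [tsub_add_cancel_of_le hle]
  · intro p hp
    simp only [Finset.HasAntidiagonal.mem_antidiagonal] at hp
    simp [Finsupp.add_apply, single_apply]

lemma pd_mul (i : ℕ) (f g : MvPowerSeries ℕ ℚ) :
    pd i (f * g) = pd i f * g + f * pd i g := by
  classical
  ext s
  rw [pd_coeff, coeff_mul, map_add, coeff_mul, coeff_mul, Finset.mul_sum]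
  have split : ∀ p ∈ Finset.HasAntidiagonal.antidiagonal (s + single i 1),
      ((s i : ℚ) + 1) * (coeff (R := ℚ) p.1 f * coeff (R := ℚ) p.2 g)
        = ((p.1 : ℕ →₀ ℕ) i : ℚ) * (coeff (R := ℚ) p.1 f * coeff (R := ℚ) p.2 g)
          + ((p.2 : ℕ →₀ ℕ) i : ℚ) * (coeff (R := ℚ) p.1 f * coeff (R := ℚ) p.2 g) := by
    intro p hp
    rw [Finset.HasAntidiagonal.mem_antidiagonal] at hp
    have h1 : p.1 i + p.2 i = s i + 1 := by
      have := congrArg (fun t : ℕ →₀ ℕ => t i) hp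
      simpa using this
    have h2 : ((p.1 : ℕ →₀ ℕ) i : ℚ) + ((p.2 : ℕ →₀ ℕ) i : ℚ) = (s i : ℚ) + 1 := by
      exact_mod_cast h1
    rw [← h2]; ring
  rw [Finset.sum_congr rfl split, Finset.sum_add_distrib]
  congr 1
  · rw [sum_antidiag_shift i s (fun a b => coeff (R := ℚ) a f * coeff (R := ℚ) b g)]
    apply Finset.sum_congr rfl
    intro p _
    rw [pd_coeff]; ring
  · rw [Finsupp.sum_antidiagonal_swap (s + single i 1)
      (fun a b => ((b : ℕ →₀ ℕ) i : ℚ) * (coeff (R := ℚ) a f * coeff (R := ℚ) b g))]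
    rw [sum_antidiag_shift i s (fun a b => coeff (R := ℚ) b f * coeff (R := ℚ) a g)]
    rw [Finsupp.sum_antidiagonal_swap s
      (fun a b => ((a : ℕ →₀ ℕ) i + 1 : ℚ) * (coeff (R := ℚ) b f * coeff (R := ℚ) (a + single i 1) g))]
    apply Finset.sum_congr rfl
    intro p _
    rw [pd_coeff]; ring

lemma pd_one (i : ℕ) : pd i (1 : MvPowerSeries ℕ ℚ) = 0 := by
  ext s
  rw [pd_coeff]
  have : (s + single i 1) ≠ 0 := by
    intro h
    have := congrArg (fun t : ℕ →₀ ℕ => t i) h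
    simp at this
  rw [coeff_one, if_neg this]
  simp

lemma pd_X (i j : ℕ) : pd i (X j : MvPowerSeries ℕ ℚ) =
    if j = i then 1 else 0 := by
  ext s
  rw [pd_coeff, coeff_X]
  by_cases hj : j = i
  · subst hj
    by_cases hs : s = 0
    · subst hs; simp
    · have : s + single j 1 ≠ single j 1 := by
        intro h
        exact hs (add_right_cancel (by rw [h, zero_add]))
      rw [if_neg this, if_pos rfl]
      have : coeff (R := ℚ) s (1 : MvPowerSeries ℕ ℚ) = 0 := by
        rw [coeff_one, if_neg hs]
      rw [this]; ring
  · have : s + single i 1 ≠ single j 1 := by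
      intro h
      have := congrArg (fun t : ℕ →₀ ℕ => t i) h
      simp [single_apply, hj] at this
    rw [if_neg this, if_neg hj]
    simp

lemma pd_pow (i : ℕ) (f : MvPowerSeries ℕ ℚ) (m : ℕ) :
    pd i (f ^ m) = (m : ℚ) • (f ^ (m - 1) * pd i f) := by
  induction m with
  | zero => simp [pd_one]
  | succ m ih =>
    rw [pow_succ, pd_mul, ih, smul_mul_assoc]
    cases m with
    | zero =>
      rw [pow_zero, one_mul]
      norm_num
    | succ m =>
      have h1 : f ^ (m + 1 - 1) * pd i f * f = f ^ (m + 1) * pd i f := by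
        rw [Nat.add_sub_cancel, mul_right_comm, ← pow_succ]
      rw [h1]
      have h2 : f ^ (m + 1 + 1 - 1) = f ^ (m + 1) := rfl
      rw [h2]
      push_cast
      module

lemma hasSum_pd {F : ℕ → MvPowerSeries ℕ ℚ} {g : MvPowerSeries ℕ ℚ} (i : ℕ)
    (h : HasSum F g) : HasSum (fun n => pd i (F n)) (pd i g) := by
  have h' : ∀ t : ℕ →₀ ℕ, HasSum (fun n => (F n) t) (g t) := fun t => Pi.hasSum.mp h t
  refine Pi.hasSum.mpr fun s => ?_
  exact (h' (s + single i 1)).mul_left ((s i : ℚ) + 1)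

lemma hasSum_mul_right {F : ℕ → MvPowerSeries ℕ ℚ} {g c : MvPowerSeries ℕ ℚ}
    (h : HasSum F g) : HasSum (fun n => F n * c) (g * c) := by
  classical
  have h' : ∀ t : ℕ →₀ ℕ, HasSum (fun n => (F n) t) (g t) := fun t => Pi.hasSum.mp h t
  refine Pi.hasSum.mpr fun s => ?_
  have hc : ∀ n : ℕ, (F n * c) s = ∑ p ∈ Finset.HasAntidiagonal.antidiagonal s, (F n) p.1 * c p.2 :=
    fun n => coeff_mul s (F n) c
  have hg : (g * c) s = ∑ p ∈ Finset.HasAntidiagonal.antidiagonal s, g p.1 * c p.2 := coeff_mul s g c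
  simp only [hc, hg]
  exact hasSum_sum (fun p _ => (h' p.1).mul_right (c p.2))

lemma hasSum_mul_left {F : ℕ → MvPowerSeries ℕ ℚ} {g c : MvPowerSeries ℕ ℚ}
    (h : HasSum F g) : HasSum (fun n => c * F n) (c * g) := by
  simpa [mul_comm] using hasSum_mul_right (c := c) h

lemma constCoeff_I1 {I1 : MvPowerSeries ℕ ℚ} {I0 : MvPowerSeries ℕ ℚ} {l : ℕ} (hl : 1 ≤ l)
    (h : HasSum (fun p : ℕ => (p ! : ℚ)⁻¹ • (I0 ^ p * X (p + l))) I1) :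
    constantCoeff (σ := ℕ) (R := ℚ) I1 = 0 := by
  have h0 := Pi.hasSum.mp h 0
  have hz : ∀ p : ℕ, ((p ! : ℚ)⁻¹ • (I0 ^ p * X (p + l)) : MvPowerSeries ℕ ℚ) 0 = 0 := by
    intro p
    have e1 : ((p ! : ℚ)⁻¹ • (I0 ^ p * X (p + l)) : MvPowerSeries ℕ ℚ) 0
        = (p ! : ℚ)⁻¹ * constantCoeff (σ := ℕ) (R := ℚ) (I0 ^ p * X (p + l)) := rfl
    rw [e1, map_mul, constantCoeff_X, mul_zero, mul_zero]
  rw [funext hz] at h0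
  exact (hasSum_zero.unique h0).symm

lemma key0 {I0 I1 : MvPowerSeries ℕ ℚ}
    (hI0 : HasSum (fun m : ℕ => (m ! : ℚ)⁻¹ • (X m * I0 ^ m)) I0)
    (hI1 : HasSum (fun p : ℕ => (p ! : ℚ)⁻¹ • (I0 ^ p * X (p + 1))) I1)
    (n : ℕ) :
    (1 - I1) * pd n I0 = (n ! : ℚ)⁻¹ • I0 ^ n := by
  have hA := hasSum_pd n hI0
  have hterm : ∀ m : ℕ, pd n ((m ! : ℚ)⁻¹ • (X m * I0 ^ m))
      = (if m = n then (n ! : ℚ)⁻¹ • I0 ^ n else 0)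
        + ((m : ℚ) / (m ! : ℚ)) • (X m * I0 ^ (m - 1)) * pd n I0 := by
    intro m
    rw [pd_smul, pd_mul, pd_X, pd_pow, smul_add]
    congr 1
    · split_ifs with h
      · subst h; rw [one_mul]
      · rw [zero_mul, smul_zero]
    · rw [mul_smul_comm, smul_smul, smul_mul_assoc, mul_assoc, div_eq_inv_mul]
  have hsum1 : HasSum (fun m : ℕ => if m = n then (n ! : ℚ)⁻¹ • I0 ^ n else 0)
      ((n ! : ℚ)⁻¹ • I0 ^ n) := hasSum_ite_eq n _
  have hsum2 : HasSum (fun m : ℕ => ((m : ℚ) / (m ! : ℚ)) • (X m * I0 ^ (m - 1)) * pd n I0)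
      (I1 * pd n I0) := by
    have base := hasSum_mul_right (c := pd n I0) hI1
    refine (Function.Injective.hasSum_iff (g := fun p : ℕ => p + 1)
      (fun a b h => by simpa using h) ?_).mp ?_
    · intro m hm
      have hm0 : m = 0 := by
        by_contra h
        exact hm ⟨m - 1, by show m - 1 + 1 = m; omega⟩
      subst hm0; simp
    · have hfe : ((fun m : ℕ => ((m : ℚ) / (m ! : ℚ)) • (X m * I0 ^ (m - 1)) * pd n I0)
          ∘ (fun p : ℕ => p + 1))
          = fun p : ℕ => ((p ! : ℚ)⁻¹ • (I0 ^ p * X (p + 1))) * pd n I0 := by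
        funext p
        simp only [Function.comp]
        congr 2
        · have h1 : ((p)! : ℚ) ≠ 0 := Nat.cast_ne_zero.mpr (Nat.factorial_ne_zero p)
          have h2 : ((p : ℚ) + 1) ≠ 0 := by positivity
          rw [Nat.factorial_succ]
          push_cast
          field_simp
        · rw [Nat.add_sub_cancel, mul_comm]
      rw [hfe]; exact base
  have heq : pd n I0 = (n ! : ℚ)⁻¹ • I0 ^ n + I1 * pd n I0 := by
    rw [funext hterm] at hA
    exact hA.unique (hsum1.add hsum2)
  rw [sub_mul, one_mul, sub_eq_iff_eq_add]
  exact heq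

lemma keyl {I0 Il Il1 : MvPowerSeries ℕ ℚ} {l : ℕ}
    (hIl : HasSum (fun p : ℕ => (p ! : ℚ)⁻¹ • (I0 ^ p * X (p + l))) Il)
    (hIl1 : HasSum (fun p : ℕ => (p ! : ℚ)⁻¹ • (I0 ^ p * X (p + (l + 1)))) Il1)
    (n : ℕ) :
    pd n Il = Il1 * pd n I0
      + (if l ≤ n then ((n - l)! : ℚ)⁻¹ • I0 ^ (n - l) else 0) := by
  have hA := hasSum_pd n hIl
  have hterm : ∀ p : ℕ, pd n ((p ! : ℚ)⁻¹ • (I0 ^ p * X (p + l)))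
      = ((p : ℚ) / (p ! : ℚ)) • (I0 ^ (p - 1) * X (p + l)) * pd n I0
        + (if p + l = n then (p ! : ℚ)⁻¹ • I0 ^ p else 0) := by
    intro p
    rw [pd_smul, pd_mul, pd_X, pd_pow, smul_add]
    congr 1
    · rw [smul_mul_assoc, smul_smul, smul_mul_assoc, div_eq_inv_mul, mul_right_comm]
    · split_ifs with h
      · rw [mul_one]
      · rw [mul_zero, smul_zero]
  have hsum1 : HasSum (fun p : ℕ => ((p : ℚ) / (p ! : ℚ)) • (I0 ^ (p - 1) * X (p + l)) * pd n I0)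
      (Il1 * pd n I0) := by
    have base := hasSum_mul_right (c := pd n I0) hIl1
    refine (Function.Injective.hasSum_iff (g := fun p : ℕ => p + 1)
      (fun a b h => by simpa using h) ?_).mp ?_
    · intro m hm
      have hm0 : m = 0 := by
        by_contra h
        exact hm ⟨m - 1, by show m - 1 + 1 = m; omega⟩
      subst hm0; simp
    · have hfe : ((fun p : ℕ => ((p : ℚ) / (p ! : ℚ)) • (I0 ^ (p - 1) * X (p + l)) * pd n I0)
          ∘ (fun q : ℕ => q + 1))
          = fun q : ℕ => ((q ! : ℚ)⁻¹ • (I0 ^ q * X (q + (l + 1)))) * pd n I0 := by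
        funext q
        simp only [Function.comp]
        congr 2
        · have h1 : ((q)! : ℚ) ≠ 0 := Nat.cast_ne_zero.mpr (Nat.factorial_ne_zero q)
          have h2 : ((q : ℚ) + 1) ≠ 0 := by positivity
          rw [Nat.factorial_succ]
          push_cast
          field_simp
        · have hq : q + 1 + l = q + (l + 1) := by omega
          rw [Nat.add_sub_cancel, hq]
      rw [hfe]; exact base
  have hsum2 : HasSum (fun p : ℕ => if p + l = n then (p ! : ℚ)⁻¹ • I0 ^ p else 0)
      (if l ≤ n then ((n - l)! : ℚ)⁻¹ • I0 ^ (n - l) else 0) := by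
    by_cases hln : l ≤ n
    · have hfe : (fun p : ℕ => if p + l = n then (p ! : ℚ)⁻¹ • I0 ^ p else 0)
          = fun p : ℕ => if p = n - l then ((n - l)! : ℚ)⁻¹ • I0 ^ (n - l) else 0 := by
        funext p
        by_cases hp : p = n - l
        · subst hp
          rw [if_pos (by omega), if_pos rfl]
        · rw [if_neg (by omega), if_neg hp]
      rw [hfe, if_pos hln]
      exact hasSum_ite_eq _ _
    · rw [if_neg hln]
      have hfe : (fun p : ℕ => if p + l = n then (p ! : ℚ)⁻¹ • I0 ^ p else 0)
          = fun _ : ℕ => (0 : MvPowerSeries ℕ ℚ) := by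
        funext p
        rw [if_neg (by omega)]
      rw [hfe]
      exact hasSum_zero
  rw [funext hterm] at hA
  exact hA.unique (hsum1.add hsum2)

/-- The expansion of `x^{3/2} (x-2I₀)^{-(2l+3)/2}` as a power series in `z = 1/x`:
`(x-2I₀)^{-(2l+3)/2} = x^{-(2l+3)/2}(1-2I₀/x)^{-(2l+3)/2}` expanded by the binomial
identity `∑_{n≥0} ((2n+2l+1)!!/((2l+1)!! n!)) tⁿ = (1-2t)^{-(2l+3)/2}`. -/
def Eexp (I₀ : MvPowerSeries ℕ ℚ) (l : ℕ) : PowerSeries (MvPowerSeries ℕ ℚ) :=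
  PowerSeries.X ^ l *
    PowerSeries.mk fun n => (((2 * n + 2 * l + 1)‼ : ℚ) / (((2 * l + 1)‼ : ℚ) * (n ! : ℚ))) • I₀ ^ n

/-- The loop operator `∇(x) = ∑_{n≥0} ((2n+1)!!/x^{n+3/2}) ∂/∂tₙ`, written as
`x^{-3/2} ∑_{n≥0} (2n+1)!! zⁿ ∂/∂tₙ` with `z = 1/x`, equals in the Itzykson–Zuber
coordinates
`(x-2I₀)^{-3/2} (1/(1-I₁)) ∂/∂I₀
  + ∑_{l≥1} [(x-2I₀)^{-3/2} I_{l+1}/(1-I₁) + (2l+1)!! (x-2I₀)^{-(2l+3)/2}] ∂/∂I_l`,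
where `(x-2I₀)^{-(2m+1)/2}` is interpreted as `x^{-(2m+1)/2}(1-2I₀/x)^{-(2m+1)/2}` expanded
as a power series in `1/x`; the identity is expressed by the action on each coordinate. -/
theorem loop_operator_in_I_coordinates (I : ℕ → MvPowerSeries ℕ ℚ)
    (h0 : MvPowerSeries.constantCoeff (σ := ℕ) (R := ℚ) (I 0) = 0)
    (hI0 : HasSum (fun n : ℕ => (n ! : ℚ)⁻¹ • (MvPowerSeries.X n * I 0 ^ n)) (I 0))
    (hIk : ∀ k : ℕ, 1 ≤ k →
      HasSum (fun p : ℕ => (p ! : ℚ)⁻¹ • (I 0 ^ p * MvPowerSeries.X (p + k))) (I k)) :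
    (PowerSeries.mk fun n => ((2 * n + 1)‼ : ℚ) • pd n (I 0))
      = PowerSeries.C (R := MvPowerSeries ℕ ℚ) (1 - I 1)⁻¹ * Eexp (I 0) 0 ∧
    ∀ l : ℕ, 1 ≤ l →
      (PowerSeries.mk fun n => ((2 * n + 1)‼ : ℚ) • pd n (I l))
        = PowerSeries.C (R := MvPowerSeries ℕ ℚ) (I (l + 1) * (1 - I 1)⁻¹) * Eexp (I 0) 0
          + ((2 * l + 1)‼ : ℚ) • Eexp (I 0) l := by
  have hc1 : constantCoeff (σ := ℕ) (R := ℚ) (I 1) = 0 := constCoeff_I1 le_rfl (hIk 1 le_rfl)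
  have hne : constantCoeff (σ := ℕ) (R := ℚ) (1 - I 1) ≠ 0 := by
    rw [map_sub, map_one, hc1, sub_zero]
    exact one_ne_zero
  have hinv : (1 - I 1)⁻¹ * (1 - I 1) = 1 := MvPowerSeries.inv_mul_cancel _ hne
  have hpd0 : ∀ n : ℕ, pd n (I 0) = (n ! : ℚ)⁻¹ • ((1 - I 1)⁻¹ * I 0 ^ n) := by
    intro n
    have h := key0 hI0 (hIk 1 le_rfl) n
    calc pd n (I 0) = ((1 - I 1)⁻¹ * (1 - I 1)) * pd n (I 0) := by rw [hinv, one_mul]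
    _ = (1 - I 1)⁻¹ * ((1 - I 1) * pd n (I 0)) := by rw [mul_assoc]
    _ = (1 - I 1)⁻¹ * ((n ! : ℚ)⁻¹ • I 0 ^ n) := by rw [h]
    _ = (n ! : ℚ)⁻¹ • ((1 - I 1)⁻¹ * I 0 ^ n) := by rw [mul_smul_comm]
  have hEexp0 : ∀ n : ℕ, PowerSeries.coeff (R := MvPowerSeries ℕ ℚ) n (Eexp (I 0) 0)
      = (((2 * n + 1)‼ : ℚ) / (n ! : ℚ)) • I 0 ^ n := by
    intro n
    simp [Eexp, Nat.doubleFactorial]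
  constructor
  · ext n
    rw [PowerSeries.coeff_mk, PowerSeries.coeff_C_mul, hEexp0, hpd0, smul_smul, mul_smul_comm,
      div_eq_mul_inv]
  · intro l hl
    have hpdl := keyl (hIk l hl) (hIk (l + 1) (by omega))
    ext n
    rw [PowerSeries.coeff_mk, map_add, PowerSeries.coeff_C_mul, hEexp0,
      PowerSeries.coeff_smul, hpdl, hpd0, smul_add, mul_smul_comm, smul_smul,
      mul_smul_comm, mul_assoc, div_eq_mul_inv]
    congr 1
    · have hE : PowerSeries.coeff (R := MvPowerSeries ℕ ℚ) n (Eexp (I 0) l)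
          = if l ≤ n then (((2 * (n - l) + 2 * l + 1)‼ : ℚ)
              / (((2 * l + 1)‼ : ℚ) * ((n - l)! : ℚ))) • I 0 ^ (n - l) else 0 := by
        rw [Eexp, PowerSeries.coeff_X_pow_mul']
        split_ifs with h
        · rw [PowerSeries.coeff_mk]
        · rfl
      rw [hE]
      by_cases hln : l ≤ n
      · rw [if_pos hln, if_pos hln, smul_smul, smul_smul]
        have h2 : 2 * (n - l) + 2 * l + 1 = 2 * n + 1 := by omega
        rw [h2]
        have hdf : ((2 * l + 1)‼ : ℚ) ≠ 0 := by
          exact_mod_cast (Nat.doubleFactorial_pos (2 * l + 1)).ne'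
        have hfn : (((n - l)!) : ℚ) ≠ 0 := Nat.cast_ne_zero.mpr (Nat.factorial_ne_zero _)
        congr 1
        rw [mul_div_assoc', mul_div_mul_left _ _ hdf, div_eq_mul_inv]
      · rw [if_neg hln, if_neg hln, smul_zero, smul_zero]

end
end

section
/- Let g ≥ 2 and suppose F_g = ∑ c(l_2,...,l_{3g-2}) ∏_j Ĩ_j^{l_j}, summed over tuples with ∑_{j=2}^{3g-2}(j-1)l_j = 3g-3, where Ĩ_j = I_j/(1-I_1)^{(2j+1)/3}. At the k-th critical point (I_0 = q, 1 - I_1 = k a q^{k-1}, I_j = -(k!/(k-j)!) a q^{k-j} for 2 ≤ j ≤ k, I_j = 0 for j > k), each monomial ∏_j Ĩ_j^{l_j} scales as a constant times q^{(1-g)(2k+1)}, hence F_g(t_0) = C_{g,k} · t_0^{(1-g)(2+1/k)} for a constant C_{g,k}, where t_0 = a q^k. -/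
open scoped Nat

/-- The Itzykson–Zuber variable `I_j` (`j ≥ 2`) evaluated at the `k`-th critical point:
`I_j = -(k!/(k-j)!) a q^{k-j}` for `j ≤ k` and `I_j = 0` for `j > k`. -/
noncomputable def IcritVal (k : ℕ) (a q : ℝ) (j : ℕ) : ℝ :=
  if j ≤ k then -((k ! : ℝ) / ((k - j)! : ℝ)) * a * q ^ (k - j) else 0

/-- The renormalized variable `Ĩ_j = I_j/(1-I₁)^{(2j+1)/3}` at the `k`-th critical point,
where `1 - I₁ = k a q^{k-1}`. -/
noncomputable def ItildeVal (k : ℕ) (a q : ℝ) (j : ℕ) : ℝ :=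
  IcritVal k a q j / ((k : ℝ) * a * q ^ (k - 1)) ^ ((2 * (j : ℝ) + 1) / 3)

lemma Itilde_scaling (k : ℕ) (hk : 1 ≤ k) (a : ℝ) (ha : 0 < a) (j : ℕ) :
    ∃ E : ℝ, ∀ q : ℝ, 0 < q →
      ItildeVal k a q j = E * q ^ (-(((j : ℝ) - 1) * (2 * (k : ℝ) + 1) / 3)) := by
  have hk0 : (0:ℝ) < (k:ℝ) := by exact_mod_cast hk
  by_cases hjk : j ≤ k
  · refine ⟨(-((k ! : ℝ) / ((k - j)! : ℝ)) * a) / ((k : ℝ) * a) ^ ((2 * (j : ℝ) + 1) / 3),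
      fun q hq => ?_⟩
    have hden : (0:ℝ) < ((k : ℝ) * a) ^ ((2 * (j : ℝ) + 1) / 3) :=
      Real.rpow_pos_of_pos (by positivity) _
    have hsplit : ((k : ℝ) * a * q ^ (k - 1)) ^ ((2 * (j : ℝ) + 1) / 3)
        = ((k : ℝ) * a) ^ ((2 * (j : ℝ) + 1) / 3)
          * q ^ (((k - 1 : ℕ) : ℝ) * ((2 * (j : ℝ) + 1) / 3)) := by
      rw [Real.mul_rpow (by positivity) (by positivity),
        Real.rpow_natCast_mul hq.le]
    have hexp : -(((j : ℝ) - 1) * (2 * (k : ℝ) + 1) / 3)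
        = ((k - j : ℕ) : ℝ) - ((k - 1 : ℕ) : ℝ) * ((2 * (j : ℝ) + 1) / 3) := by
      rw [Nat.cast_sub hjk, Nat.cast_sub hk]
      push_cast
      ring
    rw [ItildeVal, IcritVal, if_pos hjk, hsplit, hexp, Real.rpow_sub hq,
      Real.rpow_natCast]
    have hq2 : (0:ℝ) < q ^ (((k - 1 : ℕ) : ℝ) * ((2 * (j : ℝ) + 1) / 3)) :=
      Real.rpow_pos_of_pos hq _
    field_simp
  · refine ⟨0, fun q hq => ?_⟩
    rw [ItildeVal, IcritVal, if_neg hjk, zero_div, zero_mul]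

lemma monomial_scaling (g k : ℕ) (hg : 2 ≤ g) (hk : 1 ≤ k) (a : ℝ) (ha : 0 < a)
    (l : ℕ → ℕ)
    (hl : ∑ j ∈ Finset.Icc 2 (3 * g - 2), l j * (j - 1) = 3 * g - 3) :
    ∃ d : ℝ, ∀ q : ℝ, 0 < q →
      ∏ j ∈ Finset.Icc 2 (3 * g - 2), (ItildeVal k a q j) ^ (l j)
        = d * q ^ ((1 - (g : ℝ)) * (2 * (k : ℝ) + 1)) := by
  choose E hE using fun j => Itilde_scaling k hk a ha j
  refine ⟨∏ j ∈ Finset.Icc 2 (3 * g - 2), (E j) ^ (l j), fun q hq => ?_⟩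
  have step : ∀ j ∈ Finset.Icc 2 (3 * g - 2),
      (ItildeVal k a q j) ^ (l j)
        = (E j) ^ (l j)
          * q ^ ((-(((j : ℝ) - 1) * (2 * (k : ℝ) + 1) / 3)) * (l j : ℝ)) := by
    intro j hj
    rw [hE j q hq, mul_pow, ← Real.rpow_mul_natCast hq.le]
  rw [Finset.prod_congr rfl step, Finset.prod_mul_distrib,
    ← Real.rpow_sum_of_pos hq]
  have hsum : ∑ j ∈ Finset.Icc 2 (3 * g - 2), (l j : ℝ) * ((j : ℝ) - 1)
      = 3 * (g : ℝ) - 3 := by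
    have h1 : ((∑ j ∈ Finset.Icc 2 (3 * g - 2), l j * (j - 1) : ℕ) : ℝ)
        = ((3 * g - 3 : ℕ) : ℝ) := congrArg (fun n : ℕ => (n : ℝ)) hl
    rw [Nat.cast_sum] at h1
    rw [Finset.sum_congr rfl (fun j hj => ?_), h1, Nat.cast_sub (by omega)]
    · push_cast; ring
    · have h2 : 2 ≤ j := (Finset.mem_Icc.mp hj).1
      rw [Nat.cast_mul, Nat.cast_sub (by omega)]
      push_cast; ring
  have hexps : ∑ j ∈ Finset.Icc 2 (3 * g - 2),
        (-(((j : ℝ) - 1) * (2 * (k : ℝ) + 1) / 3)) * (l j : ℝ)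
      = (1 - (g : ℝ)) * (2 * (k : ℝ) + 1) := by
    calc ∑ j ∈ Finset.Icc 2 (3 * g - 2),
          (-(((j : ℝ) - 1) * (2 * (k : ℝ) + 1) / 3)) * (l j : ℝ)
        = (-(2 * (k : ℝ) + 1) / 3) * ∑ j ∈ Finset.Icc 2 (3 * g - 2),
            (l j : ℝ) * ((j : ℝ) - 1) := by
          rw [Finset.mul_sum]; exact Finset.sum_congr rfl fun j _ => by ring
      _ = (1 - (g : ℝ)) * (2 * (k : ℝ) + 1) := by rw [hsum]; ring
  rw [hexps]

/-- Let `g ≥ 2` and let `F_g = ∑ c(l) ∏_j Ĩ_j^{l_j}`, summed over tuples with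
`∑_{j=2}^{3g-2} (j-1) l_j = 3g-3`.  At the `k`-th critical point each monomial
`∏_j Ĩ_j^{l_j}` scales as a constant times `q^{(1-g)(2k+1)}`, hence
`F_g(t₀) = C · t₀^{(1-g)(2+1/k)}` for a constant `C`, where `t₀ = a qᵏ`. -/
theorem free_energy_critical_exponent (g k : ℕ) (hg : 2 ≤ g) (hk : 2 ≤ k) (a : ℝ)
    (ha : 0 < a) (S : Finset (ℕ → ℕ)) (c : (ℕ → ℕ) → ℝ)
    (hS : ∀ l ∈ S, ∑ j ∈ Finset.Icc 2 (3 * g - 2), l j * (j - 1) = 3 * g - 3) :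
    (∀ l ∈ S, ∃ d : ℝ, ∀ q : ℝ, 0 < q →
      ∏ j ∈ Finset.Icc 2 (3 * g - 2), (ItildeVal k a q j) ^ (l j)
        = d * q ^ ((1 - (g : ℝ)) * (2 * (k : ℝ) + 1))) ∧
    (∃ C : ℝ, ∀ q : ℝ, 0 < q →
      ∑ l ∈ S, c l * ∏ j ∈ Finset.Icc 2 (3 * g - 2), (ItildeVal k a q j) ^ (l j)
        = C * (a * q ^ k) ^ ((1 - (g : ℝ)) * (2 + 1 / (k : ℝ)))) := by
  have hk1 : 1 ≤ k := by omega
  have hmono : ∀ l ∈ S, ∃ d : ℝ, ∀ q : ℝ, 0 < q →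
      ∏ j ∈ Finset.Icc 2 (3 * g - 2), (ItildeVal k a q j) ^ (l j)
        = d * q ^ ((1 - (g : ℝ)) * (2 * (k : ℝ) + 1)) :=
    fun l hl => monomial_scaling g k hg hk1 a ha l (hS l hl)
  refine ⟨hmono, ?_⟩
  classical
  set D : (ℕ → ℕ) → ℝ := fun l =>
    if h : l ∈ S then (hmono l h).choose else 0 with hD
  have hkR : (0:ℝ) < (k:ℝ) := by exact_mod_cast hk1
  refine ⟨(∑ l ∈ S, c l * D l) / a ^ ((1 - (g : ℝ)) * (2 + 1 / (k : ℝ))), fun q hq => ?_⟩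
  have haE : (0:ℝ) < a ^ ((1 - (g : ℝ)) * (2 + 1 / (k : ℝ))) := Real.rpow_pos_of_pos ha _
  have hrhs : (a * q ^ k) ^ ((1 - (g : ℝ)) * (2 + 1 / (k : ℝ)))
      = a ^ ((1 - (g : ℝ)) * (2 + 1 / (k : ℝ))) * q ^ ((1 - (g : ℝ)) * (2 * (k : ℝ) + 1)) := by
    rw [Real.mul_rpow ha.le (by positivity), ← Real.rpow_natCast q k,
      ← Real.rpow_mul hq.le]
    congr 1
    field_simp
  rw [hrhs, Finset.sum_congr rfl (fun l hl => ?_)]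
  · rw [div_mul_eq_mul_div, mul_comm (a ^ _), ← mul_assoc,
      mul_div_assoc, div_self haE.ne', mul_one, Finset.sum_mul]
  · rw [hD]
    simp only [dif_pos hl]
    rw [(hmono l hl).choose_spec q hq, mul_assoc]
end
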